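/- (Theorem 3, positivity consequence) Let n ≥ 1, let n₁ be an integer with 1 ≤ n₁ ≤ n, set n₂ = n − n₁ and β = n/n₁, and let σ₁, …, σₙ be positive reals and b₁, …, bₙ reals. Define G(ρ) = (Σᵢ₌₁ⁿ σᵢ²bᵢ²/(σᵢ²+ρ)²)·(Σⱼ₌₁^{n₁} (βσⱼ²+ρ)/(σⱼ²+ρ)²) + (n₂/ρ)·(Σᵢ₌₁ⁿ σᵢ²bᵢ²/(σᵢ²+ρ)²) − (Σᵢ₌₁ⁿ bᵢ²/(σᵢ²+ρ)²)·(Σⱼ₌₁^{n₁} σⱼ²(βσⱼ²+ρ)/(σⱼ²+ρ)²). If n·(Σⱼ₌₁ⁿ σⱼ²bⱼ²) > (Σᵢ₌₁^{n₁} σᵢ²)·(Σⱼ₌₁ⁿ bⱼ²), then there exists ρ₀ > 0 such that G(ρ) > 0 for every ρ > ρ₀; that is, G approaches its limit 0 at +∞ from the positive direction. -/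

import Mathlib

/-!
For large `ρ` every summand of `G` behaves like a power of `1/ρ`: the sums weighted by
`1/(σᵢ² + ρ)²` are `Σ σᵢ²bᵢ²/ρ² + o(1/ρ²)` and `Σ bᵢ²/ρ² + o(1/ρ²)`, while the sums over the first
`n₁` indices are `n₁/ρ + o(1/ρ)` and `Σ σⱼ²/ρ + o(1/ρ)`. Hence
`ρ³ G(ρ) → n₁ Σ σ²b² + n₂ Σ σ²b² - (Σⱼ₌₁^{n₁} σⱼ²)(Σ b²) = n Σ σ²b² - (Σⱼ₌₁^{n₁} σⱼ²)(Σ b²)`,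
which is positive by hypothesis, so `G(ρ) > 0` for all large `ρ`.
-/

/-- The COPRA characteristic function `G(ρ)`. -/
noncomputable def copraG (n n₁ : ℕ) (σ b : ℕ → ℝ) (ρ : ℝ) : ℝ :=
  (∑ i ∈ Finset.range n, σ i ^ 2 * b i ^ 2 / (σ i ^ 2 + ρ) ^ 2) *
      (∑ j ∈ Finset.range n₁,
        (((n : ℝ) / n₁) * σ j ^ 2 + ρ) / (σ j ^ 2 + ρ) ^ 2)
    + (((n - n₁ : ℕ) : ℝ) / ρ) *
        (∑ i ∈ Finset.range n, σ i ^ 2 * b i ^ 2 / (σ i ^ 2 + ρ) ^ 2)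
    - (∑ i ∈ Finset.range n, b i ^ 2 / (σ i ^ 2 + ρ) ^ 2) *
        (∑ j ∈ Finset.range n₁,
          σ j ^ 2 * (((n : ℝ) / n₁) * σ j ^ 2 + ρ) / (σ j ^ 2 + ρ) ^ 2)

open Filter Topology Finset

lemma tendsto_add_div_add_atTop (a c : ℝ) :
    Tendsto (fun ρ : ℝ => (c + ρ) / (a + ρ)) atTop (𝓝 1) := by
  have hinv : Tendsto (fun ρ : ℝ => (a + ρ)⁻¹) atTop (𝓝 0) :=
    tendsto_inv_atTop_zero.comp (tendsto_atTop_add_const_left _ a tendsto_id)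
  have hlim : Tendsto (fun ρ : ℝ => 1 + (c - a) * (a + ρ)⁻¹) atTop (𝓝 1) := by
    simpa using (hinv.const_mul (c - a)).const_add 1
  refine hlim.congr' ?_
  filter_upwards [eventually_gt_atTop (-a)] with ρ hρ
  have hne : a + ρ ≠ 0 := by linarith
  field_simp
  ring

lemma tendsto_sq_mul_div_add_sq_atTop (a c : ℝ) :
    Tendsto (fun ρ : ℝ => ρ ^ 2 * (c / (a + ρ) ^ 2)) atTop (𝓝 c) := by
  have hlim := ((tendsto_add_div_add_atTop a 0).pow 2).const_mul c
  simp only [zero_add, one_pow, mul_one] at hlim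
  refine hlim.congr fun ρ => ?_
  rw [div_pow]
  ring

lemma tendsto_mul_add_div_add_sq_atTop (a c : ℝ) :
    Tendsto (fun ρ : ℝ => ρ * ((c + ρ) / (a + ρ) ^ 2)) atTop (𝓝 1) := by
  have hlim := (tendsto_add_div_add_atTop a 0).mul (tendsto_add_div_add_atTop a c)
  simp only [zero_add, mul_one] at hlim
  refine hlim.congr fun ρ => ?_
  rw [div_mul_div_comm, ← sq, mul_div_assoc]

theorem tendsto_pow_three_mul_copraG {n n₁ : ℕ} (hn₁n : n₁ ≤ n) (σ b : ℕ → ℝ) :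
    Tendsto (fun ρ : ℝ => ρ ^ 3 * copraG n n₁ σ b ρ) atTop
      (𝓝 ((n : ℝ) * (∑ j ∈ range n, σ j ^ 2 * b j ^ 2)
        - (∑ i ∈ range n₁, σ i ^ 2) * (∑ j ∈ range n, b j ^ 2))) := by
  have hσb : Tendsto (fun ρ : ℝ => ρ ^ 2 * ∑ i ∈ range n, σ i ^ 2 * b i ^ 2 / (σ i ^ 2 + ρ) ^ 2)
      atTop (𝓝 (∑ i ∈ range n, σ i ^ 2 * b i ^ 2)) := by
    simpa only [mul_sum] using
      tendsto_finsetSum _ fun i _ => tendsto_sq_mul_div_add_sq_atTop (σ i ^ 2) (σ i ^ 2 * b i ^ 2)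
  have hb : Tendsto (fun ρ : ℝ => ρ ^ 2 * ∑ i ∈ range n, b i ^ 2 / (σ i ^ 2 + ρ) ^ 2)
      atTop (𝓝 (∑ i ∈ range n, b i ^ 2)) := by
    simpa only [mul_sum] using
      tendsto_finsetSum _ fun i _ => tendsto_sq_mul_div_add_sq_atTop (σ i ^ 2) (b i ^ 2)
  have hcount : Tendsto (fun ρ : ℝ =>
      ρ * ∑ j ∈ range n₁, ((n : ℝ) / n₁ * σ j ^ 2 + ρ) / (σ j ^ 2 + ρ) ^ 2) atTop (𝓝 (n₁ : ℝ)) := by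
    simpa only [mul_sum, sum_const, card_range, nsmul_eq_mul, mul_one] using
      tendsto_finsetSum (range n₁) fun j _ =>
        tendsto_mul_add_div_add_sq_atTop (σ j ^ 2) ((n : ℝ) / n₁ * σ j ^ 2)
  have hσsum : Tendsto (fun ρ : ℝ =>
      ρ * ∑ j ∈ range n₁, σ j ^ 2 * ((n : ℝ) / n₁ * σ j ^ 2 + ρ) / (σ j ^ 2 + ρ) ^ 2)
      atTop (𝓝 (∑ j ∈ range n₁, σ j ^ 2)) := by
    have hlim := tendsto_finsetSum (range n₁) fun j _ =>
      ((tendsto_mul_add_div_add_sq_atTop (σ j ^ 2) ((n : ℝ) / n₁ * σ j ^ 2)).const_mul (σ j ^ 2))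
    simp only [mul_one] at hlim
    refine hlim.congr fun ρ => ?_
    rw [mul_sum]
    refine sum_congr rfl fun j _ => ?_
    rw [mul_div_assoc, mul_left_comm]
  have hsplit : (n₁ : ℝ) + ((n - n₁ : ℕ) : ℝ) = n := by
    rw [Nat.cast_sub hn₁n]
    ring
  have hlim := ((hσb.mul hcount).add (hσb.const_mul ((n - n₁ : ℕ) : ℝ))).sub (hb.mul hσsum)
  rw [mul_comm _ (n₁ : ℝ), ← add_mul, hsplit, mul_comm (∑ i ∈ range n, b i ^ 2)] at hlim
  refine hlim.congr' ?_
  filter_upwards [eventually_ne_atTop 0] with ρ hρ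
  unfold copraG
  field_simp

theorem stmt_14_general (n n₁ : ℕ) (hn₁n : n₁ ≤ n)
    (σ b : ℕ → ℝ)
    (hcond : (∑ i ∈ Finset.range n₁, σ i ^ 2) * (∑ j ∈ Finset.range n, b j ^ 2)
      < (n : ℝ) * (∑ j ∈ Finset.range n, σ j ^ 2 * b j ^ 2)) :
    ∃ ρ₀ : ℝ, 0 < ρ₀ ∧ ∀ ρ : ℝ, ρ₀ < ρ → 0 < copraG n n₁ σ b ρ := by
  have hpos : ∀ᶠ ρ : ℝ in atTop, 0 < ρ ^ 3 * copraG n n₁ σ b ρ :=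
    (tendsto_pow_three_mul_copraG hn₁n σ b).eventually (eventually_gt_nhds (sub_pos.2 hcond))
  have hG : ∀ᶠ ρ : ℝ in atTop, 0 < copraG n n₁ σ b ρ := by
    filter_upwards [hpos, eventually_gt_atTop 0] with ρ hρG hρ
    exact pos_of_mul_pos_right hρG (pow_pos hρ 3).le
  exact (atTop_basis_Ioi' 0).eventually_iff.mp hG

/-- (Theorem 3, positivity consequence) If
`n·Σⱼ σⱼ²bⱼ² > (Σᵢ₌₁^{n₁} σᵢ²)·(Σⱼ bⱼ²)`, then `G(ρ) > 0` for all sufficiently large `ρ`;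
i.e. `G` approaches its limit `0` at `+∞` from the positive direction. -/
theorem stmt_14 (n n₁ : ℕ) (hn : 1 ≤ n) (hn₁ : 1 ≤ n₁) (hn₁n : n₁ ≤ n)
    (σ b : ℕ → ℝ) (hσ : ∀ i < n, 0 < σ i)
    (hcond : (∑ i ∈ Finset.range n₁, σ i ^ 2) * (∑ j ∈ Finset.range n, b j ^ 2)
      < (n : ℝ) * (∑ j ∈ Finset.range n, σ j ^ 2 * b j ^ 2)) :
    ∃ ρ₀ : ℝ, 0 < ρ₀ ∧ ∀ ρ : ℝ, ρ₀ < ρ → 0 < copraG n n₁ σ b ρ :=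
  stmt_14_general n n₁ hn₁n σ b hcond
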